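/- arXiv:1209.5351 — 5 statements merged into one kernel-verified Lean document; each statement's English description precedes it below -/
import Mathlib

section
/- Let V be a finite-dimensional real vector space, ♯ : V* → V a skew linear map (β(♯(α)) = −α(♯(β)) for all α, β ∈ V*), C = range(♯), and let W ⊆ V be a lagrangian subspace, i.e. ♯(W°) = W ∩ C. Then for every h ∈ V*: ♯(h) ∈ W if and only if h ∈ (W ∩ C)°. (This is the pointwise content of the Hamilton–Jacobi theorem on almost-Poisson manifolds: for a section γ of a fibration π : E → M with Im(γ) a lagrangian submanifold, the hamiltonian vector field X_h = ♯(dh) and the projected field X_h^γ = Tπ ∘ X_h ∘ γ are γ-related if and only if dh ∈ (T Im(γ) ∩ C)°, since γ-relatedness is equivalent to X_h being tangent to Im(γ) along Im(γ).) -/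
/-!
Skewness turns `h (♯ α) = 0` into `α (♯ h) = 0`, so `(♯ U)° = ♯⁻¹(U^⊥)` for every subspace
`U ⊆ V*`. With `U = W°` the lagrangian condition makes the left side `(W ∩ C)°`, and the right
side is `♯⁻¹ W` because `(W°)^⊥ = W`.
-/

theorem Submodule.mem_dualAnnihilator_map_iff_of_skew {R M : Type*} [CommRing R]
    [AddCommGroup M] [Module R M] {sharp : Module.Dual R M →ₗ[R] M}
    (hskew : ∀ α β : Module.Dual R M, β (sharp α) = - α (sharp β))
    (U : Submodule R (Module.Dual R M)) (h : Module.Dual R M) :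
    h ∈ (U.map sharp).dualAnnihilator ↔ sharp h ∈ U.dualCoannihilator := by
  simp only [Submodule.mem_dualAnnihilator, Submodule.mem_dualCoannihilator, Submodule.mem_map,
    forall_exists_index, and_imp, forall_apply_eq_imp_iff₂, hskew _ h, neg_eq_zero]

theorem sharp_mem_lagrangian_iff_general
    (V : Type*) [AddCommGroup V] [Module ℝ V]
    (sharp : Module.Dual ℝ V →ₗ[ℝ] V)
    (hskew : ∀ α β : Module.Dual ℝ V, β (sharp α) = - α (sharp β))
    (W : Submodule ℝ V)
    (hlag : W.dualAnnihilator.map sharp = W ⊓ LinearMap.range sharp) :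
    ∀ h : Module.Dual ℝ V,
      sharp h ∈ W ↔ h ∈ (W ⊓ LinearMap.range sharp).dualAnnihilator := by
  intro h
  rw [← hlag, Submodule.mem_dualAnnihilator_map_iff_of_skew hskew,
    Subspace.dualAnnihilator_dualCoannihilator_eq]

/-- Pointwise Hamilton–Jacobi theorem on almost-Poisson manifolds: for a skew map
`♯ : V* → V` with characteristic subspace `C = range ♯` and a lagrangian subspace `W`
(i.e. `♯(W°) = W ⊓ C`), one has `♯ h ∈ W ↔ h ∈ (W ⊓ C)°` for every `h ∈ V*`. -/
theorem sharp_mem_lagrangian_iff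
    (V : Type*) [AddCommGroup V] [Module ℝ V] [FiniteDimensional ℝ V]
    (sharp : Module.Dual ℝ V →ₗ[ℝ] V)
    (hskew : ∀ α β : Module.Dual ℝ V, β (sharp α) = - α (sharp β))
    (W : Submodule ℝ V)
    (hlag : W.dualAnnihilator.map sharp = W ⊓ LinearMap.range sharp) :
    ∀ h : Module.Dual ℝ V,
      sharp h ∈ W ↔ h ∈ (W ⊓ LinearMap.range sharp).dualAnnihilator :=
  sharp_mem_lagrangian_iff_general V sharp hskew W hlag
end

section
/- Let h : ℝⁿ × ℝⁿ → ℝ and γ : ℝⁿ → ℝⁿ be differentiable, and suppose γ is closed in the sense that its derivative Dγ(q) = fderiv γ at q is a symmetric linear map for every q (⟨Dγ(q)v, w⟩ = ⟨Dγ(q)w, v⟩ for all v, w). Denote by ∇₁h(q,p) and ∇₂h(q,p) the partial gradients of h with respect to the first and second ℝⁿ-variable. Then the following are equivalent: (1) for every q ∈ ℝⁿ, Dγ(q)(∇₂h(q, γ(q))) = −∇₁h(q, γ(q)) (i.e. the Hamiltonian vector field X_h(q,p) = (∇₂h(q,p), −∇₁h(q,p)) and the projected vector field X_h^γ(q) =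 ∇₂h(q, γ(q)) are γ-related); (2) the function q ↦ h(q, γ(q)) has vanishing derivative at every point of ℝⁿ. -/
/-! The chain rule gives `d(h ∘ (id, γ))_q v = ∂₁h(v) + ∂₂h(Dγ_q v) = ⟨∇₁h + Dγ_q ∇₂h, v⟩`,
where the symmetry of `Dγ_q` moves it from `v` onto `∇₂h`. So the differential of `q ↦ h(q, γ q)`
vanishes at `q` exactly when `Dγ_q(∇₂h) = -∇₁h` there. -/

section ChainRule

variable {𝕜 E F G : Type*} [NontriviallyNormedField 𝕜]
  [NormedAddCommGroup E] [NormedSpace 𝕜 E] [NormedAddCommGroup F] [NormedSpace 𝕜 F]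
  [NormedAddCommGroup G] [NormedSpace 𝕜 G]

theorem fderiv_comp_graph_apply {h : E × F → G} {γ : E → F} {q : E}
    (hh : DifferentiableAt 𝕜 h (q, γ q)) (hγ : DifferentiableAt 𝕜 γ q) (v : E) :
    fderiv 𝕜 (fun q' => h (q', γ q')) q v =
      fderiv 𝕜 h (q, γ q) (v, 0) + fderiv 𝕜 h (q, γ q) (0, fderiv 𝕜 γ q v) := by
  have hgraph : HasFDerivAt (fun q' => h (q', γ q'))
      ((fderiv 𝕜 h (q, γ q)).comp ((ContinuousLinearMap.id 𝕜 E).prod (fderiv 𝕜 γ q))) q :=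
    hh.hasFDerivAt.comp q ((hasFDerivAt_id q).prodMk hγ.hasFDerivAt)
  rw [hgraph.fderiv, ← map_add, Prod.mk_add_mk, add_zero, zero_add]
  rfl

end ChainRule

section Gradient

variable {ι : Type*} [Fintype ι]

theorem fderiv_comp_graph_apply_eq_dotProduct {h : (ι → ℝ) × (ι → ℝ) → ℝ}
    {γ : (ι → ℝ) → (ι → ℝ)} {q : ι → ℝ}
    (hh : DifferentiableAt ℝ h (q, γ q)) (hγ : DifferentiableAt ℝ γ q)
    (hsymm : ∀ v w, fderiv ℝ γ q v ⬝ᵥ w = fderiv ℝ γ q w ⬝ᵥ v)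
    {g₁ g₂ : ι → ℝ} (hg₁ : ∀ v, fderiv ℝ h (q, γ q) (v, 0) = g₁ ⬝ᵥ v)
    (hg₂ : ∀ v, fderiv ℝ h (q, γ q) (0, v) = g₂ ⬝ᵥ v) (v : ι → ℝ) :
    fderiv ℝ (fun q' => h (q', γ q')) q v = (g₁ + fderiv ℝ γ q g₂) ⬝ᵥ v := by
  rw [fderiv_comp_graph_apply hh hγ, hg₁, hg₂, dotProduct_comm g₂, hsymm, add_dotProduct]

theorem ContinuousLinearMap.eq_zero_iff_of_dotProduct {L : (ι → ℝ) →L[ℝ] ℝ}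
    {w : ι → ℝ} (hL : ∀ v, L v = w ⬝ᵥ v) : L = 0 ↔ w = 0 := by
  refine ⟨fun h0 => dotProduct_self_eq_zero.mp ?_, fun hw => ?_⟩
  · rw [← hL, h0, zero_apply]
  · ext v
    rw [hL, hw, zero_dotProduct, zero_apply]

end Gradient

/-- Classical Hamilton–Jacobi theorem on `T*ℝⁿ`: for a closed 1-form `γ` (symmetric
derivative), the Hamiltonian vector field `X_h = (∇₂h, −∇₁h)` and the projected field
`X_h^γ(q) = ∇₂h(q, γ(q))` are `γ`-related iff `d(h ∘ γ) = 0`. -/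
theorem classical_hamilton_jacobi_iff
    (n : ℕ) (h : (Fin n → ℝ) × (Fin n → ℝ) → ℝ)
    (γ : (Fin n → ℝ) → (Fin n → ℝ))
    (hh : Differentiable ℝ h) (hγ : Differentiable ℝ γ)
    (hclosed : ∀ q v w : Fin n → ℝ,
      ∑ i, fderiv ℝ γ q v i * w i = ∑ i, fderiv ℝ γ q w i * v i)
    (g₁ g₂ : (Fin n → ℝ) × (Fin n → ℝ) → (Fin n → ℝ))
    (hg₁ : ∀ (z : (Fin n → ℝ) × (Fin n → ℝ)) (v : Fin n → ℝ),
      fderiv ℝ h z (v, 0) = ∑ i, g₁ z i * v i)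
    (hg₂ : ∀ (z : (Fin n → ℝ) × (Fin n → ℝ)) (v : Fin n → ℝ),
      fderiv ℝ h z (0, v) = ∑ i, g₂ z i * v i) :
    (∀ q : Fin n → ℝ, fderiv ℝ γ q (g₂ (q, γ q)) = - g₁ (q, γ q)) ↔
      (∀ q : Fin n → ℝ, fderiv ℝ (fun q' => h (q', γ q')) q = 0) := by
  refine forall_congr' fun q => ?_
  have hgrad := fderiv_comp_graph_apply_eq_dotProduct (hh _) (hγ q) (hclosed q)
    (hg₁ (q, γ q)) (hg₂ (q, γ q))
  rw [ContinuousLinearMap.eq_zero_iff_of_dotProduct hgrad, add_eq_zero_iff_eq_neg']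
end

section
/- Let h : ℝⁿ × ℝⁿ → ℝ be differentiable, let γ : ℝⁿ → ℝⁿ be differentiable with symmetric derivative at every point (⟨Dγ(q)v, w⟩ = ⟨Dγ(q)w, v⟩ for all q, v, w), and suppose the function q ↦ h(q, γ(q)) has vanishing derivative at every point (the Hamilton–Jacobi equation). If q : ℝ → ℝⁿ is a differentiable curve satisfying q′(t) = ∇₂h(q(t), γ(q(t))) for all t, then the curve c(t) = (q(t), γ(q(t))) satisfies Hamilton's equations: q′(t) = ∇₂h(c(t)) and (d/dt)(γ(q(t))) = −∇₁h(c(t)) for all t. -/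
/-!
Differentiating the Hamilton–Jacobi equation `h(q, γ q) = const` gives
`∇₁h + Dγᵀ ∇₂h = 0` along the graph of `γ`; since `γ` is closed, `Dγᵀ = Dγ`, so
`Dγ (∇₂h) = -∇₁h` there. Along a solution of `q' = ∇₂h(q, γ q)` the chain rule then gives
`(γ ∘ q)' = Dγ q' = -∇₁h(q, γ q)`.
-/

open Matrix

theorem fderiv_graph_apply {𝕜 E F G : Type*} [NontriviallyNormedField 𝕜]
    [NormedAddCommGroup E] [NormedSpace 𝕜 E] [NormedAddCommGroup F] [NormedSpace 𝕜 F]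
    [NormedAddCommGroup G] [NormedSpace 𝕜 G] {h : E × F → G} {γ : E → F} {x : E}
    (hh : DifferentiableAt 𝕜 h (x, γ x)) (hγ : DifferentiableAt 𝕜 γ x) (v : E) :
    fderiv 𝕜 (fun y => h (y, γ y)) x v = fderiv 𝕜 h (x, γ x) (v, fderiv 𝕜 γ x v) := by
  have hgraph : HasFDerivAt (fun y => (y, γ y))
      ((ContinuousLinearMap.id 𝕜 E).prod (fderiv 𝕜 γ x)) x :=
    (hasFDerivAt_id x).prodMk hγ.hasFDerivAt
  exact DFunLike.congr_fun (hh.hasFDerivAt.comp x hgraph).fderiv v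

theorem fderiv_apply_grad₂_eq_neg_grad₁ {ι : Type*} [Fintype ι] {h : (ι → ℝ) × (ι → ℝ) → ℝ}
    {γ : (ι → ℝ) → (ι → ℝ)} {x a b : ι → ℝ}
    (hh : DifferentiableAt ℝ h (x, γ x)) (hγ : DifferentiableAt ℝ γ x)
    (hsymm : ∀ v w, fderiv ℝ γ x v ⬝ᵥ w = fderiv ℝ γ x w ⬝ᵥ v)
    (ha : ∀ v, fderiv ℝ h (x, γ x) (v, 0) = a ⬝ᵥ v)
    (hb : ∀ v, fderiv ℝ h (x, γ x) (0, v) = b ⬝ᵥ v)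
    (hHJ : fderiv ℝ (fun y => h (y, γ y)) x = 0) :
    fderiv ℝ γ x b = -a := by
  rw [eq_neg_iff_add_eq_zero, add_comm]
  refine dotProduct_eq_zero _ fun v => ?_
  calc (a + fderiv ℝ γ x b) ⬝ᵥ v
      = fderiv ℝ h (x, γ x) ((v, 0) + (0, fderiv ℝ γ x v)) := by
        rw [map_add, ha, hb, add_dotProduct, dotProduct_comm b, hsymm]
    _ = fderiv ℝ (fun y => h (y, γ y)) x v := by
        rw [fderiv_graph_apply hh hγ, Prod.mk_add_mk, add_zero, zero_add]
    _ = 0 := by rw [hHJ, _root_.zero_apply]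

/-- Classical Hamilton–Jacobi theorem: if `γ` is a closed 1-form solving the
Hamilton–Jacobi equation `d(h ∘ γ) = 0`, then any solution `q(t)` of
`q' = ∇₂h(q, γ(q))` lifts to a solution `c(t) = (q(t), γ(q(t)))` of Hamilton's
equations `q' = ∇₂h(c)`, `p' = −∇₁h(c)`. -/
theorem hamilton_jacobi_lift
    (n : ℕ) (h : (Fin n → ℝ) × (Fin n → ℝ) → ℝ)
    (γ : (Fin n → ℝ) → (Fin n → ℝ))
    (hh : Differentiable ℝ h) (hγ : Differentiable ℝ γ)
    (hclosed : ∀ q v w : Fin n → ℝ,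
      ∑ i, fderiv ℝ γ q v i * w i = ∑ i, fderiv ℝ γ q w i * v i)
    (g₁ g₂ : (Fin n → ℝ) × (Fin n → ℝ) → (Fin n → ℝ))
    (hg₁ : ∀ (z : (Fin n → ℝ) × (Fin n → ℝ)) (v : Fin n → ℝ),
      fderiv ℝ h z (v, 0) = ∑ i, g₁ z i * v i)
    (hg₂ : ∀ (z : (Fin n → ℝ) × (Fin n → ℝ)) (v : Fin n → ℝ),
      fderiv ℝ h z (0, v) = ∑ i, g₂ z i * v i)
    (hHJ : ∀ q : Fin n → ℝ, fderiv ℝ (fun q' => h (q', γ q')) q = 0)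
    (q : ℝ → (Fin n → ℝ)) (hq : Differentiable ℝ q)
    (hode : ∀ t : ℝ, deriv q t = g₂ (q t, γ (q t))) :
    ∀ t : ℝ,
      deriv q t = g₂ (q t, γ (q t)) ∧
        deriv (fun s => γ (q s)) t = - g₁ (q t, γ (q t)) := by
  intro t
  refine ⟨hode t, ?_⟩
  show deriv (γ ∘ q) t = _
  rw [fderiv_comp_deriv t (hγ _) (hq t), hode t]
  exact fderiv_apply_grad₂_eq_neg_grad₁ (hh _) (hγ _) (hclosed _) (hg₁ _) (hg₂ _) (hHJ _)
end

section
/- Let V be a finite-dimensional real vector space, ♯ : V* → V a skew linear map (β(♯(α)) = −α(♯(β)) for all α, β ∈ V*), C = range(♯), and W ⊆ V a lagrangian subspace, i.e. ♯(W°) = W ∩ C. Then for all h, τ ∈ V*: there exists B ∈ ℝ with ♯(h + B·τ) ∈ W if and only if h ∈ (W ∩ C)° + span_ℝ{τ}. (This is the pointwise content of the time-dependent Hamilton–Jacobi theorem: with τ = dt, the vectors projecting onto the evolution vector field ∂/∂t + X_h are exactly X_{h_ext} + B ∂/∂e = ♯_ext(dh_ext + B dt), so tangency of some such vector to the lagrangian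 section Im(γ) is equivalent to dh_ext ∈ (T Im(γ) ∩ C_ext)° + ⟨dt⟩.) -/
/-!
A subspace is cut out by its annihilator, so `♯ α ∈ W` iff every `β ∈ W°` kills `♯ α`; by
skewness this means that `α` kills every `♯ β`, i.e. all of `♯(W°) = W ∩ C`. Hence
`♯ α ∈ W ↔ α ∈ (W ∩ C)°`, and for `α = h + B • τ` the existence of `B` is membership of `h`
in `(W ∩ C)° + span {τ}`.
-/

theorem Submodule.mem_sup_span_singleton_iff_exists_add_smul_mem {R M : Type*} [Ring R]
    [AddCommGroup M] [Module R M] (p : Submodule R M) (x y : M) :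
    x ∈ p ⊔ R ∙ y ↔ ∃ a : R, x + a • y ∈ p := by
  constructor
  · rw [Submodule.mem_sup]
    rintro ⟨z, hz, w, hw, rfl⟩
    obtain ⟨a, rfl⟩ := Submodule.mem_span_singleton.mp hw
    exact ⟨-a, by simpa [add_assoc] using hz⟩
  · rintro ⟨a, ha⟩
    have hy : a • y ∈ R ∙ y := Submodule.smul_mem _ a (Submodule.mem_span_singleton_self y)
    simpa using Submodule.sub_mem_sup ha hy

theorem sharp_mem_iff_mem_dualAnnihilator_inf_range {K V : Type*} [Field K] [AddCommGroup V]
    [Module K V] {sharp : Module.Dual K V →ₗ[K] V}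
    (hskew : ∀ α β : Module.Dual K V, β (sharp α) = -α (sharp β)) {W : Submodule K V}
    (hlag : W.dualAnnihilator.map sharp = W ⊓ LinearMap.range sharp) (α : Module.Dual K V) :
    sharp α ∈ W ↔ α ∈ (W ⊓ LinearMap.range sharp).dualAnnihilator := by
  rw [← Subspace.forall_mem_dualAnnihilator_apply_eq_zero_iff, ← hlag,
    Submodule.mem_dualAnnihilator]
  simp only [Submodule.mem_map, forall_exists_index, and_imp, forall_apply_eq_imp_iff₂]
  refine forall₂_congr fun β _ ↦ ?_
  rw [hskew, neg_eq_zero]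

theorem exists_sharp_mem_lagrangian_iff_time_dependent_general
    (V : Type*) [AddCommGroup V] [Module ℝ V]
    (sharp : Module.Dual ℝ V →ₗ[ℝ] V)
    (hskew : ∀ α β : Module.Dual ℝ V, β (sharp α) = - α (sharp β))
    (W : Submodule ℝ V)
    (hlag : W.dualAnnihilator.map sharp = W ⊓ LinearMap.range sharp) :
    ∀ h τ : Module.Dual ℝ V,
      (∃ B : ℝ, sharp (h + B • τ) ∈ W) ↔
        h ∈ (W ⊓ LinearMap.range sharp).dualAnnihilator ⊔ Submodule.span ℝ {τ} := by
  intro h τ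
  simp only [sharp_mem_iff_mem_dualAnnihilator_inf_range hskew hlag,
    Submodule.mem_sup_span_singleton_iff_exists_add_smul_mem]

/-- Pointwise time-dependent Hamilton–Jacobi theorem: for a skew map `♯ : V* → V`,
`C = range ♯`, and a lagrangian subspace `W` (`♯(W°) = W ⊓ C`), for all `h, τ ∈ V*`
there exists `B ∈ ℝ` with `♯(h + B•τ) ∈ W` iff `h ∈ (W ⊓ C)° + span {τ}`. -/
theorem exists_sharp_mem_lagrangian_iff_time_dependent
    (V : Type*) [AddCommGroup V] [Module ℝ V] [FiniteDimensional ℝ V]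
    (sharp : Module.Dual ℝ V →ₗ[ℝ] V)
    (hskew : ∀ α β : Module.Dual ℝ V, β (sharp α) = - α (sharp β))
    (W : Submodule ℝ V)
    (hlag : W.dualAnnihilator.map sharp = W ⊓ LinearMap.range sharp) :
    ∀ h τ : Module.Dual ℝ V,
      (∃ B : ℝ, sharp (h + B • τ) ∈ W) ↔
        h ∈ (W ⊓ LinearMap.range sharp).dualAnnihilator ⊔ Submodule.span ℝ {τ} :=
  exists_sharp_mem_lagrangian_iff_time_dependent_general V sharp hskew W hlag
end

section
/- Let n, k ∈ ℕ with k ≤ n, let X_α : ℝⁿ → ℝⁿ for α ∈ {1,…,n−k} and γ : ℝⁿ → ℝⁿ be differentiable maps, and define γ̃_α : ℝⁿ → ℝ by γ̃_α(q) = ⟨X_α(q), γ(q)⟩, and for each q the numbers Λ^{αβ}(q) = ⟨γ(q), DX_α(q)(X_β(q))⟩ − ⟨γ(q), DX_β(q)(X_α(q))⟩, where DX_α(q) and Dγ(q) denote Fréchet derivatives and ⟨·,·⟩ the standard inner product on ℝⁿ. Then for all α, β and all q ∈ ℝⁿ: Λ^{αβ}(q) − Dγ̃_α(q)(X_β(q))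 + Dγ̃_β(q)(X_α(q)) = ⟨Dγ(q)(X_α(q)), X_β(q)⟩ − ⟨Dγ(q)(X_β(q)), X_α(q)⟩. In particular, the local lagrangian condition for the section γ with respect to the nonholonomic bracket (whose components in the adapted coordinates (q^i, p̃_α) are Λ_nh(dq^i,dq^j) = 0, Λ_nh(dq^i,dp̃_α) = X^i_α, Λ_nh(dp̃_α,dp̃_β) = Λ^{αβ}) holds at q if and only if dγ_q(X_α(q), X_β(q)) = 0 for all α, β, where dγ_q(v,w) = ⟨Dγ(q)v, w⟩ − ⟨Dγ(q)w, v⟩. -/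
/-! By the product rule, `Dγ̃_α(X_β) = ⟨DX_α(X_β), γ⟩ + ⟨X_α, Dγ(X_β)⟩`. The terms carrying
derivatives of the vector fields cancel against `Λ^{αβ}`, and what remains is the
antisymmetrization of `⟨Dγ(X_α), X_β⟩`, i.e. `dγ(X_α, X_β)`. -/

open Finset

theorem fderiv_sum_mul_apply {𝕜 ι E : Type*} [NontriviallyNormedField 𝕜] [Fintype ι]
    [NormedAddCommGroup E] [NormedSpace 𝕜 E] {f g : E → ι → 𝕜} {x : E}
    (hf : DifferentiableAt 𝕜 f x) (hg : DifferentiableAt 𝕜 g x) (v : E) :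
    fderiv 𝕜 (fun y => ∑ i, f y i * g y i) x v =
      ∑ i, (fderiv 𝕜 f x v i * g x i + f x i * fderiv 𝕜 g x v i) := by
  have hfi (i : ι) : DifferentiableAt 𝕜 (fun y => f y i) x := differentiableAt_pi.1 hf i
  have hgi (i : ι) : DifferentiableAt 𝕜 (fun y => g y i) x := differentiableAt_pi.1 hg i
  rw [fderiv_fun_sum fun i _ => (hfi i).fun_mul (hgi i), _root_.sum_apply]
  refine sum_congr rfl fun i _ => ?_
  rw [fderiv_fun_mul (hfi i) (hgi i), fderiv_apply hf, fderiv_apply hg]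
  simp only [_root_.add_apply, _root_.smul_apply,
    ContinuousLinearMap.comp_apply, ContinuousLinearMap.proj_apply, smul_eq_mul]
  ring

theorem antisymmetrized_fderiv_sum_mul {𝕜 ι : Type*} [NontriviallyNormedField 𝕜] [Fintype ι]
    {X Y γ : (ι → 𝕜) → ι → 𝕜} {q : ι → 𝕜}
    (hX : DifferentiableAt 𝕜 X q) (hY : DifferentiableAt 𝕜 Y q) (hγ : DifferentiableAt 𝕜 γ q) :
    ((∑ i, γ q i * fderiv 𝕜 X q (Y q) i) - (∑ i, γ q i * fderiv 𝕜 Y q (X q) i))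
        - fderiv 𝕜 (fun q' => ∑ i, X q' i * γ q' i) q (Y q)
        + fderiv 𝕜 (fun q' => ∑ i, Y q' i * γ q' i) q (X q) =
      (∑ i, fderiv 𝕜 γ q (X q) i * Y q i) - ∑ i, fderiv 𝕜 γ q (Y q) i * X q i := by
  rw [fderiv_sum_mul_apply hX hγ, fderiv_sum_mul_apply hY hγ, ← sub_eq_zero]
  simp only [← sum_sub_distrib, ← sum_add_distrib]
  exact sum_eq_zero fun i _ => by ring

theorem nonholonomic_lagrangian_local_general
    (n k : ℕ)
    (X : Fin (n - k) → (Fin n → ℝ) → (Fin n → ℝ))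
    (hX : ∀ α, Differentiable ℝ (X α))
    (γ : (Fin n → ℝ) → (Fin n → ℝ))
    (hγ : Differentiable ℝ γ) :
    ∀ q : Fin n → ℝ,
      (∀ α β : Fin (n - k),
        ((∑ i, γ q i * fderiv ℝ (X α) q (X β q) i)
            - (∑ i, γ q i * fderiv ℝ (X β) q (X α q) i))
          - fderiv ℝ (fun q' => ∑ i, X α q' i * γ q' i) q (X β q)
          + fderiv ℝ (fun q' => ∑ i, X β q' i * γ q' i) q (X α q) =
        (∑ i, fderiv ℝ γ q (X α q) i * X β q i)
          - ∑ i, fderiv ℝ γ q (X β q) i * X α q i) ∧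
      ((∀ α β : Fin (n - k),
          ((∑ i, γ q i * fderiv ℝ (X α) q (X β q) i)
              - (∑ i, γ q i * fderiv ℝ (X β) q (X α q) i))
            - fderiv ℝ (fun q' => ∑ i, X α q' i * γ q' i) q (X β q)
            + fderiv ℝ (fun q' => ∑ i, X β q' i * γ q' i) q (X α q) = 0) ↔
        (∀ α β : Fin (n - k),
          (∑ i, fderiv ℝ γ q (X α q) i * X β q i)
            - ∑ i, fderiv ℝ γ q (X β q) i * X α q i = 0)) := by
  intro q
  have key (α β : Fin (n - k)) :=
    antisymmetrized_fderiv_sum_mul (hX α q) (hX β q) (hγ q)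
  exact ⟨key, forall₂_congr fun α β => by rw [key]⟩

/-- Nonholonomic local lagrangian computation: with `γ̃_α = ⟨X_α, γ⟩` and
`Λ^{αβ} = ⟨γ, DX_α(X_β)⟩ − ⟨γ, DX_β(X_α)⟩`, one has
`Λ^{αβ} − Dγ̃_α(X_β) + Dγ̃_β(X_α) = ⟨Dγ(X_α), X_β⟩ − ⟨Dγ(X_β), X_α⟩`; hence the local
lagrangian condition for the section `γ` w.r.t. the nonholonomic bracket holds at `q`
iff `dγ_q(X_α(q), X_β(q)) = 0` for all `α, β`. -/
theorem nonholonomic_lagrangian_local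
    (n k : ℕ) (hk : k ≤ n)
    (X : Fin (n - k) → (Fin n → ℝ) → (Fin n → ℝ))
    (hX : ∀ α, Differentiable ℝ (X α))
    (γ : (Fin n → ℝ) → (Fin n → ℝ))
    (hγ : Differentiable ℝ γ) :
    ∀ q : Fin n → ℝ,
      (∀ α β : Fin (n - k),
        ((∑ i, γ q i * fderiv ℝ (X α) q (X β q) i)
            - (∑ i, γ q i * fderiv ℝ (X β) q (X α q) i))
          - fderiv ℝ (fun q' => ∑ i, X α q' i * γ q' i) q (X β q)
          + fderiv ℝ (fun q' => ∑ i, X β q' i * γ q' i) q (X α q) =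
        (∑ i, fderiv ℝ γ q (X α q) i * X β q i)
          - ∑ i, fderiv ℝ γ q (X β q) i * X α q i) ∧
      ((∀ α β : Fin (n - k),
          ((∑ i, γ q i * fderiv ℝ (X α) q (X β q) i)
              - (∑ i, γ q i * fderiv ℝ (X β) q (X α q) i))
            - fderiv ℝ (fun q' => ∑ i, X α q' i * γ q' i) q (X β q)
            + fderiv ℝ (fun q' => ∑ i, X β q' i * γ q' i) q (X α q) = 0) ↔
        (∀ α β : Fin (n - k),
          (∑ i, fderiv ℝ γ q (X α q) i * X β q i)
            - ∑ i, fderiv ℝ γ q (X β q) i * X α q i = 0)) :=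
  nonholonomic_lagrangian_local_general n k X hX γ hγ
end
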